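/- Let R be a finite ring with two-sided ideal J, let S = R/J, let f be a polynomial with integer coefficients (zero constant term) in d-1 variables, c an integer. If C_R and C_S denote the smallest Salem constants of V_{f,c}(R) ⊆ R^d and V_{f,c}(S) ⊆ S^d respectively, then C_R ≥ C_S · |J|^{(d-1)/2}. -/

import Mathlib

open Finset

/-- The (smallest) Salem constant of a subset `S` of a finite abelian group. -/
noncomputable def salemConst {G : Type} [AddCommGroup G] [Fintype G] (S : Finset G) : ℝ :=
  sSup {r : ℝ | ∃ ψ : AddChar G ℂ, ψ ≠ 1 ∧
    r = ‖∑ x ∈ S, ψ x‖ / (S.card : ℝ) ^ ((1 : ℝ) / 2)}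

/-!
Reduction modulo `J` is a surjective additive map `Φ : R^d → S^d` carrying `V_{f,c}(R)` onto
`V_{f,c}(S)` with fibres of size `|J|^{d-1}`. Pulling a nontrivial character `ψ` of `S^d` back
along `Φ` gives a nontrivial character of `R^d` whose sum over `V_{f,c}(R)` is `|J|^{d-1}` times
the sum of `ψ` over `V_{f,c}(S)`, while `|V_{f,c}(R)| = |J|^{d-1} |V_{f,c}(S)|`; so the
normalised sum grows by the factor `|J|^{(d-1)/2}`.
-/

section SalemConst

variable {G : Type} [AddCommGroup G] [Fintype G]

lemma salemConst_nonneg (S : Finset G) : 0 ≤ salemConst S :=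
  Real.sSup_nonneg <| by
    rintro r ⟨ψ, -, rfl⟩
    exact div_nonneg (norm_nonneg _) (Real.rpow_nonneg (Nat.cast_nonneg _) _)

lemma le_salemConst (S : Finset G) {ψ : AddChar G ℂ} (hψ : ψ ≠ 1) :
    ‖∑ x ∈ S, ψ x‖ / (#S : ℝ) ^ ((1 : ℝ) / 2) ≤ salemConst S := by
  refine le_csSup (Set.Finite.bddAbove <| (Set.finite_range
    fun χ : AddChar G ℂ ↦ ‖∑ x ∈ S, χ x‖ / (#S : ℝ) ^ ((1 : ℝ) / 2)).subset ?_) ⟨ψ, hψ, rfl⟩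
  rintro _ ⟨χ, -, rfl⟩
  exact ⟨χ, rfl⟩

lemma salemConst_le {S : Finset G} {b : ℝ} (hb : 0 ≤ b)
    (h : ∀ ψ : AddChar G ℂ, ψ ≠ 1 → ‖∑ x ∈ S, ψ x‖ / (#S : ℝ) ^ ((1 : ℝ) / 2) ≤ b) :
    salemConst S ≤ b :=
  Real.sSup_le (by rintro r ⟨ψ, hψ, rfl⟩; exact h ψ hψ) hb

end SalemConst

theorem salemConst_mul_sqrt_le_of_card_fiber {G H : Type} [AddCommGroup G] [Fintype G]
    [AddCommGroup H] [Fintype H] [DecidableEq H] (Φ : G →+ H) (hΦ : Function.Surjective Φ)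
    {V : Finset G} {W : Finset H} {m : ℕ} (hVW : ∀ x ∈ V, Φ x ∈ W)
    (hfib : ∀ y ∈ W, #{x ∈ V | Φ x = y} = m) :
    salemConst W * √m ≤ salemConst V := by
  rcases m.eq_zero_or_pos with rfl | hm
  · simpa using salemConst_nonneg V
  have hsqrt : 0 < √(m : ℝ) := Real.sqrt_pos.2 (by exact_mod_cast hm)
  rw [← le_div_iff₀ hsqrt]
  refine salemConst_le (div_nonneg (salemConst_nonneg V) hsqrt.le) fun ψ hψ ↦ ?_
  have hψΦ : ψ.compAddMonoidHom Φ ≠ 1 := (AddChar.compAddMonoidHom_injective_left Φ hΦ).ne hψ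
  have hsum : ∑ x ∈ V, ψ (Φ x) = m • ∑ y ∈ W, ψ y := by
    rw [← sum_fiberwise_of_maps_to hVW, smul_sum]
    refine sum_congr rfl fun y hy ↦ ?_
    rw [sum_congr rfl fun x hx ↦ by rw [(mem_filter.1 hx).2], sum_const, hfib y hy]
  have hcard : #V = m * #W := by
    rw [card_eq_sum_card_fiberwise hVW, sum_congr rfl hfib, sum_const, smul_eq_mul, mul_comm]
  rw [le_div_iff₀ hsqrt]
  calc ‖∑ y ∈ W, ψ y‖ / (#W : ℝ) ^ ((1 : ℝ) / 2) * √m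
      = ‖∑ x ∈ V, ψ.compAddMonoidHom Φ x‖ / (#V : ℝ) ^ ((1 : ℝ) / 2) := by
        simp only [AddChar.compAddMonoidHom_apply, hsum, hcard, nsmul_eq_mul, norm_mul,
          Complex.norm_natCast, Nat.cast_mul, ← Real.sqrt_eq_rpow,
          Real.sqrt_mul (Nat.cast_nonneg m)]
        rw [mul_div_mul_comm, Real.div_sqrt, mul_comm]
    _ ≤ salemConst V := le_salemConst V hψΦ

section Graph

variable {A B A' B' : Type} [Fintype A] [Fintype B] [DecidableEq B] [Fintype A'] [Fintype B']
  [DecidableEq B']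

def graphFinset (F : A → B) : Finset (A × B) := {x | x.2 = F x.1}

lemma mem_graphFinset {F : A → B} {x : A × B} : x ∈ graphFinset F ↔ x.2 = F x.1 := by
  simp [graphFinset]

variable {f : A → A'} {g : B → B'} {F : A → B} {F' : A' → B'}

lemma map_mem_graphFinset (hF : ∀ a, g (F a) = F' (f a)) {x : A × B}
    (hx : x ∈ graphFinset F) : (f x.1, g x.2) ∈ graphFinset F' := by
  rw [mem_graphFinset] at hx ⊢
  rw [hx, hF]

lemma card_graphFinset_fiber [DecidableEq A'] (hF : ∀ a, g (F a) = F' (f a)) {y : A' × B'}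
    (hy : y ∈ graphFinset F') :
    #{x ∈ graphFinset F | (f x.1, g x.2) = y} = #{a | f a = y.1} := by
  refine card_bij' (fun x _ ↦ x.1) (fun a _ ↦ (a, F a)) ?_ ?_ ?_ ?_
  · intro x hx
    simp only [mem_filter, mem_univ, true_and] at hx ⊢
    rw [← hx.2]
  · intro a ha
    simp only [mem_filter, mem_univ, true_and] at ha
    refine mem_filter.2 ⟨mem_graphFinset.2 rfl, Prod.ext ha ?_⟩
    rw [mem_graphFinset.1 hy, ← ha, ← hF]
  · intro x hx
    exact Prod.ext rfl (mem_graphFinset.1 (mem_filter.1 hx).1).symm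
  · intro a _
    rfl

end Graph

section RingHom

variable {R S : Type} [Ring R] [Ring S] (π : R →+* S)

lemma card_fiber_eq_card_ker (hπ : Function.Surjective π) (s : S) :
    Nat.card {r : R // π r = s} = Nat.card (RingHom.ker π) := by
  obtain ⟨r₀, rfl⟩ := hπ s
  exact Nat.card_congr <| Equiv.subtypeEquiv (Equiv.subRight r₀) fun r ↦ by
    simp [RingHom.mem_ker, sub_eq_zero]

lemma card_filter_comp_eq_pow [Fintype R] [Fintype S] [DecidableEq S] {ι : Type} [Fintype ι]
    [DecidableEq ι] (hπ : Function.Surjective π) (t : ι → S) :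
    #{a : ι → R | π ∘ a = t} = Nat.card (RingHom.ker π) ^ Fintype.card ι := by
  simp only [funext_iff, Function.comp_apply]
  rw [← Fintype.card_subtype, ← Nat.card_eq_fintype_card,
    Nat.card_congr (Equiv.subtypePiEquivPi (p := fun i r ↦ π r = t i)), Nat.card_pi]
  simp only [card_fiber_eq_card_ker π hπ, prod_const, card_univ]

lemma map_freeAlgebraLift {ι : Type} (a : ι → R) (p : FreeAlgebra ℤ ι) :
    π (FreeAlgebra.lift ℤ a p) = FreeAlgebra.lift ℤ (π ∘ a) p :=
  DFunLike.congr_fun (FreeAlgebra.hom_ext (funext fun i ↦ by simp) :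
    π.toIntAlgHom.comp (FreeAlgebra.lift ℤ a) = FreeAlgebra.lift ℤ (π ∘ a)) p

end RingHom

theorem stmt12_general {R S : Type} [Ring R] [Fintype R] [DecidableEq R]
    [Ring S] [Fintype S] [DecidableEq S]
    (π : R →+* S) (hπ : Function.Surjective π) (d : ℕ) (hd : 2 ≤ d)
    (p : FreeAlgebra ℤ (Fin (d - 1))) (c : ℤ) :
    salemConst (Finset.univ.filter (fun x : (Fin (d - 1) → S) × S =>
        x.2 = FreeAlgebra.lift ℤ x.1 p + (c : S))) *
      (Nat.card (RingHom.ker π) : ℝ) ^ (((d : ℝ) - 1) / 2)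
    ≤ salemConst (Finset.univ.filter (fun x : (Fin (d - 1) → R) × R =>
        x.2 = FreeAlgebra.lift ℤ x.1 p + (c : R))) := by
  let Φ := (π.toAddMonoidHom.compLeft (Fin (d - 1))).prodMap π.toAddMonoidHom
  have hΦ : Function.Surjective Φ := hπ.comp_left.prodMap hπ
  have hF (a : Fin (d - 1) → R) :
      π (FreeAlgebra.lift ℤ a p + c) = FreeAlgebra.lift ℤ (π ∘ a) p + c := by
    rw [map_add, map_freeAlgebraLift, map_intCast]
  have hscale : (Nat.card (RingHom.ker π) : ℝ) ^ (((d : ℝ) - 1) / 2)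
      = √((Nat.card (RingHom.ker π) ^ (d - 1) : ℕ) : ℝ) := by
    rw [Real.sqrt_eq_rpow, Nat.cast_pow, ← Real.rpow_natCast, ← Real.rpow_mul (Nat.cast_nonneg _),
      Nat.cast_sub (by omega), Nat.cast_one, mul_one_div]
  rw [hscale]
  show salemConst (graphFinset fun a : Fin (d - 1) → S ↦ FreeAlgebra.lift ℤ a p + (c : S)) * _
    ≤ salemConst (graphFinset fun a : Fin (d - 1) → R ↦ FreeAlgebra.lift ℤ a p + (c : R))
  refine salemConst_mul_sqrt_le_of_card_fiber Φ hΦ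
    (fun x ↦ map_mem_graphFinset (f := (π ∘ ·)) (g := π) hF)
    fun y hy ↦ (card_graphFinset_fiber (f := (π ∘ ·)) (g := π) hF hy).trans ?_
  rw [card_filter_comp_eq_pow π hπ, Fintype.card_fin]

/-- Let `S = R/J` be the quotient of a finite ring `R` by a two-sided ideal `J`
(presented via a surjective ring homomorphism `π : R → S` with kernel `J`), and let
`V_{f,c}` be the graph of an integer polynomial `f` with zero constant term, shifted by
an integer `c`. Then the Salem constants satisfy `C_R ≥ C_S · |J|^{(d-1)/2}`. -/
theorem stmt12 {R S : Type} [Ring R] [Fintype R] [DecidableEq R]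
    [Ring S] [Fintype S] [DecidableEq S]
    (π : R →+* S) (hπ : Function.Surjective π) (d : ℕ) (hd : 2 ≤ d)
    (p : FreeAlgebra ℤ (Fin (d - 1)))
    (hp : FreeAlgebra.lift ℤ (fun _ : Fin (d - 1) => (0 : ℤ)) p = 0) (c : ℤ) :
    salemConst (Finset.univ.filter (fun x : (Fin (d - 1) → S) × S =>
        x.2 = FreeAlgebra.lift ℤ x.1 p + (c : S))) *
      (Nat.card (RingHom.ker π) : ℝ) ^ (((d : ℝ) - 1) / 2)
    ≤ salemConst (Finset.univ.filter (fun x : (Fin (d - 1) → R) × R =>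
        x.2 = FreeAlgebra.lift ℤ x.1 p + (c : R))) :=
  stmt12_general π hπ d hd p c
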